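/- Let A be an even N×N matrix of the Type-2 form: A = Σ_i x_i e^i_i + Σ_{j∈Y} y_j e^{σ(j)}_j, where (Y, σ) is an admissible pair (σ : Y → I strictly decreasing, parity-preserving, fixed-point free) with Y ∩ σ(Y) = ∅, x_i = λ for i ∈ [1,b] and x_i = 0 for i ∈ (b,N], with b ∈ [b₋, b₊) and all y_j ≠ 0. Then A satisfies the reflection equation Š A₂ Š A₂ = A₂ Š A₂ Š with the GL-type graded braid matrix Š. -/
import Mathlib


open Matrix

noncomputable def sEnt (N : ℕ) (p : Fin N → ℕ) (q : ℂ) (i k : Fin N) : ℂ :=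
  if i < k then q - q⁻¹
  else if i = k then ((-1 : ℂ)) ^ (p i) * (if p i % 2 = 0 then q else q⁻¹)
  else 0

/-- The GL-type graded braid matrix. -/
noncomputable def braidS (N : ℕ) (p : Fin N → ℕ) (q : ℂ) :
    Matrix (Fin N × Fin N) (Fin N × Fin N) ℂ :=
  fun r c =>
    (if r = c then sEnt N p q r.1 r.2 else 0) +
    (if r.1 = c.2 ∧ r.2 = c.1 ∧ r.1 ≠ r.2 then ((-1 : ℂ)) ^ (p r.1 * p r.2) else 0)

/-- `A₂ = id ⊗ A`. -/
def Atwo (N : ℕ) (A : Matrix (Fin N) (Fin N) ℂ) :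
    Matrix (Fin N × Fin N) (Fin N × Fin N) ℂ :=
  fun r c => (if r.1 = c.1 then 1 else 0) * A r.2 c.2

lemma braidS_mul_apply (N : ℕ) (p : Fin N → ℕ) (q : ℂ)
    (M : Matrix (Fin N × Fin N) (Fin N × Fin N) ℂ) (r c : Fin N × Fin N) :
    (braidS N p q * M) r c = sEnt N p q r.1 r.2 * M r c +
      (if r.1 = r.2 then 0 else ((-1:ℂ)) ^ (p r.1 * p r.2) * M (r.2, r.1) c) := by
  rw [Matrix.mul_apply]
  have : ∀ x : Fin N × Fin N, braidS N p q r x * M x c =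
      (if x = r then sEnt N p q r.1 r.2 * M r c else 0) +
      (if x = (r.2, r.1) then (if r.1 = r.2 then 0 else ((-1:ℂ)) ^ (p r.1 * p r.2) * M (r.2, r.1) c) else 0) := by
    intro x
    simp only [braidS, add_mul, ite_mul, zero_mul]
    congr 1
    · by_cases hx : x = r
      · subst hx; simp
      · rw [if_neg (fun h => hx h.symm), if_neg hx]
    · by_cases hx : x = (r.2, r.1)
      · subst hx
        by_cases h2 : r.1 = r.2
        · simp [h2]
        · simp [h2, Ne.symm h2]
      · rw [if_neg, if_neg hx]
        rintro ⟨h1, h2, -⟩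
        exact hx (Prod.ext h2.symm h1.symm)
  rw [Finset.sum_congr rfl (fun x _ => this x), Finset.sum_add_distrib,
    Finset.sum_ite_eq' Finset.univ r, Finset.sum_ite_eq' Finset.univ (r.2, r.1)]
  simp

lemma mul_braidS_apply (N : ℕ) (p : Fin N → ℕ) (q : ℂ)
    (M : Matrix (Fin N × Fin N) (Fin N × Fin N) ℂ) (r c : Fin N × Fin N) :
    (M * braidS N p q) r c = M r c * sEnt N p q c.1 c.2 +
      (if c.1 = c.2 then 0 else ((-1:ℂ)) ^ (p c.1 * p c.2) * M r (c.2, c.1)) := by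
  rw [Matrix.mul_apply]
  have : ∀ x : Fin N × Fin N, M r x * braidS N p q x c =
      (if x = c then M r c * sEnt N p q c.1 c.2 else 0) +
      (if x = (c.2, c.1) then (if c.1 = c.2 then 0 else ((-1:ℂ)) ^ (p c.1 * p c.2) * M r (c.2, c.1)) else 0) := by
    intro x
    simp only [braidS, mul_add, mul_ite, mul_zero]
    congr 1
    · by_cases hx : x = c
      · subst hx; simp
      · rw [if_neg hx, if_neg hx]
    · by_cases hx : x = (c.2, c.1)
      · subst hx
        by_cases h2 : c.1 = c.2
        · simp [h2]
        · have hcond : ((c.2,c.1).1 = c.2 ∧ (c.2,c.1).2 = c.1 ∧ (c.2,c.1).1 ≠ (c.2,c.1).2) :=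
            ⟨rfl, rfl, Ne.symm h2⟩
          rw [if_pos hcond, if_neg h2, Nat.mul_comm (p c.2) (p c.1)]
          simp [mul_comm]
      · rw [if_neg, if_neg hx]
        rintro ⟨h1, h2, -⟩
        exact hx (Prod.ext h1 h2)
  rw [Finset.sum_congr rfl (fun x _ => this x), Finset.sum_add_distrib,
    Finset.sum_ite_eq' Finset.univ c, Finset.sum_ite_eq' Finset.univ (c.2, c.1)]
  simp

lemma Atwo_mul_apply (N : ℕ) (A : Matrix (Fin N) (Fin N) ℂ)
    (X : Matrix (Fin N × Fin N) (Fin N × Fin N) ℂ) (r c : Fin N × Fin N) :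
    (Atwo N A * X) r c = ∑ n, A r.2 n * X (r.1, n) c := by
  rw [Matrix.mul_apply, Fintype.sum_prod_type]
  rw [Finset.sum_eq_single r.1]
  · apply Finset.sum_congr rfl
    intro n _
    simp [Atwo]
  · intro m _ hm
    apply Finset.sum_eq_zero
    intro n _
    simp [Atwo, Ne.symm hm]
  · simp

lemma C_apply (N : ℕ) (p : Fin N → ℕ) (q : ℂ) (A : Matrix (Fin N) (Fin N) ℂ)
    (i j k l : Fin N) :
    (Atwo N A * (braidS N p q * Atwo N A)) (i,j) (k,l) =
      if i = k then (∑ n, A j n * sEnt N p q i n * A n l)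
      else ((-1:ℂ))^(p i * p k) * A j k * A i l := by
  rw [Atwo_mul_apply]
  have hSA : ∀ n : Fin N, (braidS N p q * Atwo N A) (i, n) (k, l) =
      sEnt N p q i n * ((if i = k then (1:ℂ) else 0) * A n l) +
      (if i = n then 0 else ((-1:ℂ))^(p i * p n) * ((if n = k then (1:ℂ) else 0) * A i l)) := by
    intro n; rw [braidS_mul_apply]; rfl
  by_cases hik : i = k
  · subst hik
    rw [if_pos rfl]
    apply Finset.sum_congr rfl
    intro n _
    rw [hSA n]
    by_cases hn : i = n
    · subst hn
      simp
      try ring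
    · have h1 : ¬ n = i := fun h => hn h.symm
      simp only [eq_self_iff_true, if_true, one_mul, if_neg hn, if_neg h1,
        zero_mul, mul_zero, add_zero]
      ring
  · rw [if_neg hik]
    have key : ∀ n : Fin N, A j n * (braidS N p q * Atwo N A) (i,n) (k,l) =
        (if n = k then ((-1:ℂ))^(p i * p k) * A j k * A i l else 0) := by
      intro n
      rw [hSA n]
      by_cases hnk : n = k
      · subst hnk
        have h1 : ¬ i = n := hik
        simp only [eq_self_iff_true, if_true, if_neg hik, if_neg h1, zero_mul,
          mul_zero, zero_add, one_mul]
        ring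
      · simp only [if_neg hik, if_neg hnk, zero_mul, mul_zero]
        by_cases hin : i = n <;> simp [hin]
    rw [Finset.sum_congr rfl (fun n _ => key n), Finset.sum_ite_eq' Finset.univ k]
    simp

lemma T_eq (N : ℕ) (p : Fin N → ℕ) (q : ℂ) (Y : Finset (Fin N)) (σ : Fin N → Fin N)
    (y : Fin N → ℂ) (hfix : ∀ i ∈ Y, σ i ≠ i) (hdisj : ∀ i ∈ Y, σ i ∉ Y)
    (lam : ℂ) (b : ℕ) (A : Matrix (Fin N) (Fin N) ℂ)
    (hA : A = fun i j : Fin N =>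
      (if i = j then (if (j : ℕ) < b then lam else 0) else 0) +
      (if j ∈ Y ∧ i = σ j then y j else 0))
    (i j l : Fin N) :
    (∑ n, A j n * sEnt N p q i n * A n l) =
      (if j = l then lam * (if (j:ℕ) < b then lam else 0) * sEnt N p q i j else 0) +
      (if l ∈ Y ∧ j = σ l then y l else 0) *
        ((if (j:ℕ) < b then lam else 0) * sEnt N p q i j +
         (if (l:ℕ) < b then lam else 0) * sEnt N p q i l) := by
  have he : ∀ m : Fin N, (if m ∈ Y ∧ m = σ m then y m else 0) = 0 := by
    intro m
    rw [if_neg]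
    rintro ⟨h1, h2⟩
    exact hfix m h1 h2.symm
  have key : ∀ n : Fin N, A j n * sEnt N p q i n * A n l =
      (if n = j then (if (j:ℕ) < b then lam else 0) * sEnt N p q i j *
          ((if j = l then (if (l:ℕ) < b then lam else 0) else 0) +
           (if l ∈ Y ∧ j = σ l then y l else 0)) else 0) +
      (if n = l then (if l ∈ Y ∧ j = σ l then y l else 0) * sEnt N p q i l *
          (if (l:ℕ) < b then lam else 0) else 0) := by
    intro n
    have hAjn : A j n = (if j = n then (if (n : ℕ) < b then lam else 0) else 0) +
        (if n ∈ Y ∧ j = σ n then y n else 0) := by rw [hA]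
    have hAnl : A n l = (if n = l then (if (l : ℕ) < b then lam else 0) else 0) +
        (if l ∈ Y ∧ n = σ l then y l else 0) := by rw [hA]
    rw [hAjn, hAnl]
    have hQS : (if n ∈ Y ∧ j = σ n then y n else 0) * sEnt N p q i n *
        (if l ∈ Y ∧ n = σ l then y l else 0) = 0 := by
      by_cases h1 : n ∈ Y ∧ j = σ n
      · by_cases h2 : l ∈ Y ∧ n = σ l
        · exact absurd (h2.2 ▸ h1.1) (hdisj l h2.1)
        · rw [if_neg h2, mul_zero]
      · rw [if_neg h1, zero_mul, zero_mul]
    by_cases hnj : n = j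
    · subst hnj
      by_cases hnl : n = l
      · subst hnl
        simp only [eq_self_iff_true, if_true, he, add_zero]
        ring
      · simp only [eq_self_iff_true, if_true, if_neg hnl, he, zero_add, add_zero]

    · have h1 : ¬ j = n := fun h => hnj h.symm
      by_cases hnl : n = l
      · subst hnl
        simp only [eq_self_iff_true, if_true, if_neg h1, if_neg hnj, he,
          zero_add, mul_zero, add_zero]

      · simp only [if_neg h1, if_neg hnj, if_neg hnl, zero_add, add_zero]
        exact hQS
  rw [Finset.sum_congr rfl (fun n _ => key n), Finset.sum_add_distrib,
    Finset.sum_ite_eq' Finset.univ j, Finset.sum_ite_eq' Finset.univ l]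
  simp only [Finset.mem_univ, if_true]
  by_cases hjl : j = l
  · subst hjl
    simp only [eq_self_iff_true, if_true, he]
    by_cases hb : (j:ℕ) < b <;> simp [hb] <;> ring
  · rw [if_neg hjl, if_neg hjl]
    ring

lemma sEnt_lt (N : ℕ) (p : Fin N → ℕ) (q : ℂ) {i k : Fin N} (h : i < k) :
    sEnt N p q i k = q - q⁻¹ := by rw [sEnt, if_pos h]

lemma sEnt_gt (N : ℕ) (p : Fin N → ℕ) (q : ℂ) {i k : Fin N} (h : k < i) :
    sEnt N p q i k = 0 := by
  rw [sEnt, if_neg (asymm h), if_neg (ne_of_gt h)]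

lemma sEnt_diag_eq (N : ℕ) (p : Fin N → ℕ) (q : ℂ) {i j : Fin N} (h : p i = p j) :
    sEnt N p q i i = sEnt N p q j j := by
  simp [sEnt, h]

lemma sEnt_hecke (N : ℕ) (p : Fin N → ℕ) (q : ℂ) (hq : q ≠ 0) (i : Fin N)
    (hp : p i ≤ 1) :
    sEnt N p q i i * sEnt N p q i i = (q - q⁻¹) * sEnt N p q i i + 1 := by
  have hne : ¬ i < i := lt_irrefl i
  rw [sEnt, if_neg hne, if_pos rfl]
  rcases Nat.le_one_iff_eq_zero_or_eq_one.mp hp with h | h <;> rw [h] <;> norm_num <;>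
    field_simp <;> ring

lemma eps_sq (e : ℕ) (x z : ℂ) : (-1:ℂ)^e * ((-1:ℂ)^e * x * z) = x * z := by
  have h : (-1:ℂ)^e * (-1:ℂ)^e = 1 := by rw [← mul_pow]; norm_num
  calc (-1:ℂ)^e * ((-1:ℂ)^e * x * z) = ((-1:ℂ)^e * (-1:ℂ)^e) * (x * z) := by ring
  _ = x * z := by rw [h, one_mul]

/-- an even Type-2 matrix (admissible pair `(Y,σ)` with
`Y ∩ σ(Y) = ∅`, diagonal `λ` on `[1,b]` with `b ∈ [b₋,b₊)`, entries `y_j ≠ 0`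
at positions `(σ(j), j)`) solves the reflection equation
`Š A₂ Š A₂ = A₂ Š A₂ Š` for the GL-type graded braid matrix `Š`. -/
theorem typeTwo_solves_RE (N : ℕ) (hN : 1 ≤ N)
    (p : Fin N → ℕ) (hp : ∀ i, p i ≤ 1) (q : ℂ) (hq : q ≠ 0)
    (Y : Finset (Fin N)) (σ : Fin N → Fin N) (y : Fin N → ℂ)
    (hdec : ∀ i ∈ Y, ∀ j ∈ Y, i < j → σ j < σ i)
    (hpar : ∀ i ∈ Y, p (σ i) = p i)
    (hfix : ∀ i ∈ Y, σ i ≠ i)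
    (hdisj : ∀ i ∈ Y, σ i ∉ Y)
    (hynz : ∀ j ∈ Y, y j ≠ 0)
    (lam : ℂ) (b bm bp : ℕ)
    (hbm : bm = ((Y.filter (fun i => i < σ i)) ∪
      (Y.filter (fun i => σ i < i)).image σ).sup (fun i => (i : ℕ) + 1))
    (hbp : bp = ((((Y.filter (fun i => σ i < i)) ∪
      (Y.filter (fun i => i < σ i)).image σ).image (fun i : Fin N => (i : ℕ) + 1)) ∪
      {N + 1}).min' ⟨N + 1, by simp⟩)
    (hb1 : bm ≤ b) (hb2 : b < bp)
    (A : Matrix (Fin N) (Fin N) ℂ)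
    (hA : A = fun i j : Fin N =>
      (if i = j then (if (j : ℕ) < b then lam else 0) else 0) +
      (if j ∈ Y ∧ i = σ j then y j else 0)) :
    braidS N p q * Atwo N A * braidS N p q * Atwo N A =
      Atwo N A * braidS N p q * Atwo N A * braidS N p q := by
  subst hbm hbp
  -- entry lemmas for A
  have hAd : ∀ m : Fin N, A m m = (if (m:ℕ) < b then lam else 0) := by
    intro m
    have h0 : (if m ∈ Y ∧ m = σ m then y m else 0) = (0:ℂ) := by
      rw [if_neg]
      rintro ⟨h1, h2⟩
      exact hfix m h1 h2.symm
    rw [hA]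
    dsimp only
    rw [if_pos rfl, h0, add_zero]
  have hAo : ∀ m n : Fin N, m ≠ n → A m n = (if n ∈ Y ∧ m = σ n then y n else 0) := by
    intro m n h
    rw [hA]
    dsimp only
    rw [if_neg h, zero_add]
  have hAe : ∀ m : Fin N, (if m ∈ Y ∧ m = σ m then y m else 0) = (0:ℂ) := by
    intro m
    rw [if_neg]
    rintro ⟨h1, h2⟩
    exact hfix m h1 h2.symm
  -- structural facts
  have hYp : ∀ l ∈ Y, σ l < l → ((σ l : ℕ) < b ∧ b ≤ (l:ℕ)) := by
    intro l hl hlt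
    constructor
    · have hmem : σ l ∈ (Y.filter (fun i => i < σ i)) ∪
          (Y.filter (fun i => σ i < i)).image σ :=
        Finset.mem_union_right _ (Finset.mem_image_of_mem σ (Finset.mem_filter.2 ⟨hl, hlt⟩))
      have h2 := Finset.le_sup (f := fun i : Fin N => (i:ℕ)+1) hmem
      have h3 : (σ l:ℕ)+1 ≤ b := le_trans h2 hb1
      omega
    · have hmem : ((l:ℕ)+1) ∈ ((((Y.filter (fun i => σ i < i)) ∪
          (Y.filter (fun i => i < σ i)).image σ).image (fun i : Fin N => (i : ℕ) + 1)) ∪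
          {N + 1}) :=
        Finset.mem_union_left _ (Finset.mem_image_of_mem _
          (Finset.mem_union_left _ (Finset.mem_filter.2 ⟨hl, hlt⟩)))
      have h2 := Finset.min'_le _ _ hmem
      omega
  have hYm : ∀ l ∈ Y, l < σ l → (((l:ℕ) < b) ∧ b ≤ (σ l:ℕ)) := by
    intro l hl hlt
    constructor
    · have hmem : l ∈ (Y.filter (fun i => i < σ i)) ∪
          (Y.filter (fun i => σ i < i)).image σ :=
        Finset.mem_union_left _ (Finset.mem_filter.2 ⟨hl, hlt⟩)
      have h2 := Finset.le_sup (f := fun i : Fin N => (i:ℕ)+1) hmem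
      have h3 : (l:ℕ)+1 ≤ b := le_trans h2 hb1
      omega
    · have hmem : ((σ l:ℕ)+1) ∈ ((((Y.filter (fun i => σ i < i)) ∪
          (Y.filter (fun i => i < σ i)).image σ).image (fun i : Fin N => (i : ℕ) + 1)) ∪
          {N + 1}) :=
        Finset.mem_union_left _ (Finset.mem_image_of_mem _
          (Finset.mem_union_right _ (Finset.mem_image_of_mem σ (Finset.mem_filter.2 ⟨hl, hlt⟩))))
      have h2 := Finset.min'_le _ _ hmem
      omega
  have hinj : ∀ k ∈ Y, ∀ l ∈ Y, σ k = σ l → k = l := by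
    intro k hk l hl h
    rcases lt_trichotomy k l with h1 | h1 | h1
    · exact absurd (hdec k hk l hl h1) (by rw [h]; exact lt_irrefl _)
    · exact h1
    · exact absurd (hdec l hl k hk h1) (by rw [h]; exact lt_irrefl _)
  have hmono : ∀ k ∈ Y, ∀ l ∈ Y, σ l < σ k → k < l := by
    intro k hk l hl h
    rcases lt_trichotomy k l with h1 | h1 | h1
    · exact h1
    · subst h1; exact absurd h (lt_irrefl _)
    · exact absurd (hdec l hl k hk h1) (asymm h)
  have key : braidS N p q * (Atwo N A * (braidS N p q * Atwo N A)) =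
      (Atwo N A * (braidS N p q * Atwo N A)) * braidS N p q := by
    ext r c
    obtain ⟨i, j⟩ := r
    obtain ⟨k, l⟩ := c
    rw [braidS_mul_apply, mul_braidS_apply]
    dsimp only
    rw [C_apply, C_apply, C_apply]
    by_cases hik : i = k
    · -- CASE I : i = k
      subst hik
      rw [if_pos rfl]
      by_cases hij : i = j
      · subst hij
        rw [if_pos rfl]
        by_cases hil : i = l
        · subst hil
          rw [if_pos rfl]
          ring
        · rw [if_neg hil, if_neg hil,
            T_eq N p q Y σ y hfix hdisj lam b A hA, if_neg hil,
            hAo i l hil, hAd i, eps_sq]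
          by_cases hYl : l ∈ Y ∧ i = σ l
          · obtain ⟨hlY, hiσ⟩ := hYl
            rw [if_pos (show l ∈ Y ∧ i = σ l from ⟨hlY, hiσ⟩)]
            rcases lt_trichotomy i l with h | h | h
            · have h' : σ l < l := by rw [← hiσ]; exact h
              obtain ⟨hd1, hd2⟩ := hYp l hlY h'
              have hDi : ((i:ℕ) < b) := by rw [hiσ]; exact hd1
              have hvl : (i:ℕ) < (l:ℕ) := h
              rw [if_pos hDi, if_neg (show ¬ (l:ℕ) < b by omega), sEnt_lt N p q h]
              linear_combination (y l * lam) * sEnt_hecke N p q hq i (hp i)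
            · exact absurd h hil
            · have h' : l < σ l := by rw [← hiσ]; exact h
              obtain ⟨hd1, hd2⟩ := hYm l hlY h'
              have hDi : ¬ ((i:ℕ) < b) := by
                have := congrArg Fin.val hiσ
                omega
              rw [if_neg hDi, if_pos hd1, sEnt_gt N p q h]
              ring
          · rw [if_neg hYl]
            ring
      · rw [if_neg hij, if_neg (fun h : j = i => hij h.symm)]
        by_cases hjl : j = l
        · subst hjl
          rw [if_neg hij, if_neg hij, Nat.mul_comm (p j) (p i)]
          ring
        · rw [T_eq N p q Y σ y hfix hdisj lam b A hA, if_neg hjl, hAd i]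
          by_cases hil : i = l
          · subst hil
            rw [if_pos rfl, hAo j i (fun h => hij h.symm)]
            by_cases hYi : i ∈ Y ∧ j = σ i
            · obtain ⟨hiY, hjσ⟩ := hYi
              rw [if_pos (show i ∈ Y ∧ j = σ i from ⟨hiY, hjσ⟩)]
              rcases lt_trichotomy j i with h | h | h
              · have h' : σ i < i := by rw [← hjσ]; exact h
                obtain ⟨hd1, hd2⟩ := hYp i hiY h'
                have hDi : ¬ ((i:ℕ) < b) := by omega
                rw [if_neg hDi, sEnt_gt N p q h]
                ring
              · exact absurd h.symm hij
              · have h' : i < σ i := by rw [← hjσ]; exact h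
                obtain ⟨hd1, hd2⟩ := hYm i hiY h'
                have hDj : ¬ ((j:ℕ) < b) := by
                  have := congrArg Fin.val hjσ
                  omega
                rw [if_pos hd1, if_neg hDj, sEnt_lt N p q h,
                  Nat.mul_comm (p j) (p i), eps_sq]
                linear_combination (-(lam * y i)) * sEnt_hecke N p q hq i (hp i)
            · rw [if_neg hYi]
              ring
          · rw [if_neg hil, if_neg hil, hAo j l hjl,
              Nat.mul_comm (p j) (p i), eps_sq, eps_sq]
            by_cases hYl : l ∈ Y ∧ j = σ l
            · obtain ⟨hlY, hjσ⟩ := hYl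
              rw [if_pos (show l ∈ Y ∧ j = σ l from ⟨hlY, hjσ⟩)]
              rcases lt_trichotomy j l with h | h | h
              · have h' : σ l < l := by rw [← hjσ]; exact h
                obtain ⟨hd1, hd2⟩ := hYp l hlY h'
                have hDj : ((j:ℕ) < b) := by rw [hjσ]; exact hd1
                rw [if_pos hDj, if_neg (show ¬ (l:ℕ) < b by omega)]
                rcases lt_trichotomy i j with h2 | h2 | h2
                · rw [sEnt_lt N p q h2, sEnt_lt N p q (h2.trans h)]
                  ring
                · exact absurd h2 hij
                · rw [sEnt_gt N p q h2]
                  ring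
              · exact absurd h hjl
              · have h' : l < σ l := by rw [← hjσ]; exact h
                obtain ⟨hd1, hd2⟩ := hYm l hlY h'
                have hDj : ¬ ((j:ℕ) < b) := by
                  have := congrArg Fin.val hjσ
                  omega
                rw [if_neg hDj, if_pos hd1]
                rcases lt_trichotomy i l with h2 | h2 | h2
                · rw [sEnt_lt N p q h2, sEnt_lt N p q (h2.trans h)]
                  ring
                · exact absurd h2 hil
                · rw [sEnt_gt N p q h2]
                  ring
            · rw [if_neg hYl]
              ring
    · -- CASE II : i ≠ k
      rw [if_neg hik]
      by_cases hjk : j = k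
      · subst hjk
        have hij : ¬ i = j := hik
        rw [if_neg hij, if_pos rfl]
        by_cases hil : i = l
        · subst hil
          rw [if_neg (fun h : j = i => hij h.symm), if_pos rfl,
            T_eq N p q Y σ y hfix hdisj lam b A hA,
            T_eq N p q Y σ y hfix hdisj lam b A hA,
            if_pos rfl, if_pos rfl, hAe i, hAe j, hAd i, hAd j,
            Nat.mul_comm (p j) (p i)]
          rcases lt_trichotomy i j with h | h | h
          · rw [sEnt_lt N p q h, sEnt_gt N p q h]
            by_cases hbj : (j:ℕ) < b
            · have hv : (i:ℕ) < (j:ℕ) := h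
              rw [if_pos hbj, if_pos (show (i:ℕ) < b by omega)]
              ring
            · rw [if_neg hbj]
              ring
          · exact absurd h hij
          · rw [sEnt_lt N p q h, sEnt_gt N p q h]
            by_cases hbi : (i:ℕ) < b
            · have hv : (j:ℕ) < (i:ℕ) := h
              rw [if_pos hbi, if_pos (show (j:ℕ) < b by omega)]
              ring
            · rw [if_neg hbi]
              ring
        · rw [if_neg hil, T_eq N p q Y σ y hfix hdisj lam b A hA, if_neg hil,
            hAd j, hAo i l hil]
          have hRHS : (if j = l then (0:ℂ) else (-1:ℂ)^(p j * p l) *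
              ((-1:ℂ)^(p i * p l) * A j l * A i j)) = 0 := by
            by_cases hjl : j = l
            · rw [if_pos hjl]
            · rw [if_neg hjl, hAo j l hjl, hAo i j hij]
              by_cases c1 : l ∈ Y ∧ j = σ l
              · rw [if_neg (show ¬ (j ∈ Y ∧ i = σ j) from fun c2 =>
                  hdisj l c1.1 (c1.2 ▸ c2.1))]
                ring
              · rw [if_neg c1]
                ring
          rw [hRHS]
          by_cases hYl : l ∈ Y ∧ i = σ l
          · obtain ⟨hlY, hiσ⟩ := hYl
            rw [if_pos (show l ∈ Y ∧ i = σ l from ⟨hlY, hiσ⟩)]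
            rcases lt_trichotomy i l with h | h | h
            · have h' : σ l < l := by rw [← hiσ]; exact h
              obtain ⟨hd1, hd2⟩ := hYp l hlY h'
              have hDi : ((i:ℕ) < b) := by rw [hiσ]; exact hd1
              rw [if_pos hDi, if_neg (show ¬ (l:ℕ) < b by omega)]
              rcases lt_trichotomy j i with h2 | h2 | h2
              · rw [sEnt_gt N p q h2, sEnt_lt N p q h2, sEnt_lt N p q (h2.trans h),
                  if_pos (show (j:ℕ) < b by have : (j:ℕ) < (i:ℕ) := h2; omega)]
                ring
              · exact absurd h2.symm hij
              · rcases lt_trichotomy j l with h3 | h3 | h3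
                · rw [sEnt_lt N p q h2, sEnt_gt N p q h2, sEnt_lt N p q h3]
                  ring
                · subst h3
                  rw [sEnt_lt N p q h2, sEnt_gt N p q h2,
                    if_neg (show ¬ (j:ℕ) < b by omega)]
                  ring
                · rw [sEnt_lt N p q h2, sEnt_gt N p q h2, sEnt_gt N p q h3,
                    if_neg (show ¬ (j:ℕ) < b by
                      have : (l:ℕ) < (j:ℕ) := h3; omega)]
                  ring
            · exact absurd h hil
            · have h' : l < σ l := by rw [← hiσ]; exact h
              obtain ⟨hd1, hd2⟩ := hYm l hlY h'
              have hvi : (l:ℕ) < (i:ℕ) := h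
              have hDi : ¬ ((i:ℕ) < b) := by
                have := congrArg Fin.val hiσ
                omega
              rw [if_neg hDi, if_pos hd1]
              rcases lt_trichotomy j l with h3 | h3 | h3
              · rw [sEnt_gt N p q (h3.trans h), sEnt_lt N p q h3,
                  if_pos (show (j:ℕ) < b by have : (j:ℕ) < (l:ℕ) := h3; omega)]
                ring
              · subst h3
                rw [sEnt_gt N p q h, if_pos hd1]
                ring
              · rcases lt_trichotomy j i with h2 | h2 | h2
                · rw [sEnt_gt N p q h2, sEnt_gt N p q h3]
                  ring
                · exact absurd h2.symm hij
                · rw [sEnt_lt N p q h2, sEnt_gt N p q h3,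
                    if_neg (show ¬ (j:ℕ) < b by
                      have : (i:ℕ) < (j:ℕ) := h2; omega)]
                  ring
          · rw [if_neg hYl]
            ring
      · rw [if_neg hjk]
        by_cases hil : i = l
        · subst hil
          rw [if_neg (fun h : k = i => hik h.symm), if_pos rfl,
            T_eq N p q Y σ y hfix hdisj lam b A hA, if_neg hjk,
            hAd i, hAo j k hjk, Nat.mul_comm (p k) (p i)]
          have hLHS2 : (if i = j then (0:ℂ) else (-1:ℂ)^(p i * p j) *
              ((-1:ℂ)^(p j * p k) * A i k * A j i)) = 0 := by
            by_cases hij : i = j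
            · rw [if_pos hij]
            · rw [if_neg hij, hAo i k hik, hAo j i (fun h => hij h.symm)]
              by_cases c1 : k ∈ Y ∧ i = σ k
              · rw [if_neg (show ¬ (i ∈ Y ∧ j = σ i) from fun c2 =>
                  hdisj k c1.1 (c1.2 ▸ c2.1))]
                ring
              · rw [if_neg c1]
                ring
          rw [hLHS2]
          by_cases hYk : k ∈ Y ∧ j = σ k
          · obtain ⟨hkY, hjσ⟩ := hYk
            rw [if_pos (show k ∈ Y ∧ j = σ k from ⟨hkY, hjσ⟩)]
            rcases lt_trichotomy j k with h | h | h
            · have h' : σ k < k := by rw [← hjσ]; exact h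
              obtain ⟨hd1, hd2⟩ := hYp k hkY h'
              have hDj : ((j:ℕ) < b) := by rw [hjσ]; exact hd1
              rw [if_pos hDj, if_neg (show ¬ (k:ℕ) < b by omega)]
              rcases lt_trichotomy i j with h2 | h2 | h2
              · rw [sEnt_lt N p q h2, sEnt_gt N p q (h2.trans h),
                  if_pos (show (i:ℕ) < b by have : (i:ℕ) < (j:ℕ) := h2; omega)]
                ring
              · subst h2
                rw [sEnt_gt N p q h, if_pos hDj]
                ring
              · rcases lt_trichotomy i k with h3 | h3 | h3
                · rw [sEnt_gt N p q h2, sEnt_gt N p q h3]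
                  ring
                · exact absurd h3 hik
                · rw [sEnt_gt N p q h2, sEnt_lt N p q h3,
                    if_neg (show ¬ (i:ℕ) < b by
                      have : (k:ℕ) < (i:ℕ) := h3; omega)]
                  ring
            · exact absurd h hjk
            · have h' : k < σ k := by rw [← hjσ]; exact h
              obtain ⟨hd1, hd2⟩ := hYm k hkY h'
              have hDj : ¬ ((j:ℕ) < b) := by
                have := congrArg Fin.val hjσ
                omega
              rw [if_neg hDj, if_pos hd1]
              rcases lt_trichotomy i k with h3 | h3 | h3
              · rw [sEnt_lt N p q (h3.trans h), sEnt_gt N p q h3, sEnt_lt N p q h3,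
                  if_pos (show (i:ℕ) < b by have : (i:ℕ) < (k:ℕ) := h3; omega)]
                ring
              · exact absurd h3 hik
              · rcases lt_trichotomy i j with h2 | h2 | h2
                · rw [sEnt_lt N p q h2, sEnt_lt N p q h3, sEnt_gt N p q h3]
                  ring
                · subst h2
                  rw [sEnt_lt N p q h3, sEnt_gt N p q h3, if_neg hDj]
                  ring
                · rw [sEnt_gt N p q h2, sEnt_lt N p q h3, sEnt_gt N p q h3,
                    if_neg (show ¬ (i:ℕ) < b by
                      have h4 : (j:ℕ) < (i:ℕ) := h2
                      have := congrArg Fin.val hjσ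
                      omega)]
                  ring
          · rw [if_neg hYk]
            ring
        · -- II.a : i ≠ k, j ≠ k, i ≠ l
          rw [if_neg hil, hAo j k hjk, hAo i l hil, hAo i k hik]
          have h1 : sEnt N p q i j * ((-1:ℂ)^(p i * p k) *
              (if k ∈ Y ∧ j = σ k then y k else 0) *
              (if l ∈ Y ∧ i = σ l then y l else 0)) =
              ((-1:ℂ)^(p i * p k) *
              (if k ∈ Y ∧ j = σ k then y k else 0) *
              (if l ∈ Y ∧ i = σ l then y l else 0)) * sEnt N p q k l := by
            by_cases c1 : k ∈ Y ∧ j = σ k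
            · by_cases c2 : l ∈ Y ∧ i = σ l
              · have hS : sEnt N p q i j = sEnt N p q k l := by
                  rcases lt_trichotomy k l with h | h | h
                  · have := hdec k c1.1 l c2.1 h
                    rw [sEnt_lt N p q (show i < j by
                      rw [c1.2, c2.2]; exact this), sEnt_lt N p q h]
                  · subst h
                    have hji : j = i := by rw [c1.2, c2.2]
                    subst hji
                    rw [sEnt_diag_eq N p q (show p j = p k by
                      rw [c1.2]; exact hpar k c1.1)]
                  · have := hdec l c2.1 k c1.1 h
                    rw [sEnt_gt N p q (show j < i by
                      rw [c1.2, c2.2]; exact this), sEnt_gt N p q h]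
                rw [hS]
                ring
              · rw [if_neg c2]
                ring
            · rw [if_neg c1]
              ring
          have h2 : (if i = j then (0:ℂ) else (-1:ℂ)^(p i * p j) *
              ((-1:ℂ)^(p j * p k) * (if k ∈ Y ∧ i = σ k then y k else 0) * A j l)) =
              (if k = l then (0:ℂ) else (-1:ℂ)^(p k * p l) *
              ((-1:ℂ)^(p i * p l) * A j l * (if k ∈ Y ∧ i = σ k then y k else 0))) := by
            by_cases c2 : k ∈ Y ∧ i = σ k
            · obtain ⟨hkY, hiσ⟩ := c2
              by_cases hij : i = j
              · rw [if_pos hij]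
                by_cases hkl : k = l
                · rw [if_pos hkl]
                · rw [if_neg hkl, hAo j l (fun h => hil (hij.trans h))]
                  by_cases c1 : l ∈ Y ∧ j = σ l
                  · exact absurd (hinj k hkY l c1.1
                      (hiσ.symm.trans (hij.trans c1.2))) hkl
                  · rw [if_neg c1]
                    ring
              · rw [if_neg hij]
                by_cases hjl : j = l
                · subst hjl
                  rw [if_neg (fun h : k = j => hjk h.symm), hAd j,
                    Nat.mul_comm (p j) (p k)]
                  ring
                · rw [hAo j l hjl]
                  by_cases c1 : l ∈ Y ∧ j = σ l
                  · have hkl : ¬ k = l := fun h => hij (hiσ.trans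
                      ((h ▸ c1.2).symm))
                    rw [if_neg hkl]
                    have hpi : p i = p k := by rw [hiσ]; exact hpar k hkY
                    have hpj : p j = p l := by rw [c1.2]; exact hpar l c1.1
                    rw [hpi, hpj, Nat.mul_comm (p l) (p k)]
                    ring
                  · rw [if_neg c1]
                    by_cases hkl : k = l
                    · rw [if_pos hkl]
                      ring
                    · rw [if_neg hkl]
                      ring
            · rw [if_neg c2]
              by_cases hij : i = j
              · rw [if_pos hij]
                by_cases hkl : k = l
                · rw [if_pos hkl]
                · rw [if_neg hkl]
                  ring
              · rw [if_neg hij]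
                by_cases hkl : k = l
                · rw [if_pos hkl]
                  ring
                · rw [if_neg hkl]
                  ring
          linear_combination h1 + h2
  simp only [Matrix.mul_assoc] at key ⊢
  exact key
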